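/- arXiv:1511.04925 — 4 statements merged into one kernel-verified Lean document; each statement's English description precedes it below -/
import Mathlib

section
/- Let μ ∈ [0,1) with αμ < 1, suppose ‖Q − u₁u₁ᵀ‖₂ ≤ μ. Then the PageRank vector satisfies ‖π − π̄‖₁ ≤ (1−α)·√n·√(d_max/d_min)·(αμ/(1−αμ))·‖v‖₂. -/
open Matrix Finset

/-- Spectral norm of a matrix: the operator norm induced by the Euclidean vector norm. -/
noncomputable def sNorm {n : ℕ} (M : Matrix (Fin n) (Fin n) ℝ) : ℝ :=
  ‖Matrix.toEuclideanCLM (𝕜 := ℝ) M‖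

/-- Euclidean norm of a vector. -/
noncomputable def vNorm2 {n : ℕ} (x : Fin n → ℝ) : ℝ :=
  Real.sqrt (∑ i, (x i) ^ 2)

/-!
Conjugating by `D^{1/2}` turns `P` into the symmetric `Q = E + u₁u₁ᵀ`, where `‖E‖₂ ≤ μ` and the two
summands annihilate each other. Hence
`(I - αP)⁻¹ = D^{1/2} ((I - αE)⁻¹ + α/(1-α) • u₁u₁ᵀ) D^{-1/2}`, and the rank-one part reproduces
the degree term of `π̄` exactly: `π - π̄ = (1-α) D^{1/2} ((I - αE)⁻¹ - I) D^{-1/2} v`.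
A Neumann series bounds `‖(I - αE)⁻¹ - I‖₂` by `αμ/(1-αμ)`, the diagonal factors cost
`√(d_max/d_min)`, and Cauchy–Schwarz passes from `‖·‖₂` to `‖·‖₁` at the cost of `√n`.
-/

theorem NormedRing.norm_inverse_one_sub_sub_one_le {R : Type*} [NormedRing R] [NormOneClass R]
    [HasSummableGeomSeries R] {t : R} {r : ℝ} (ht : ‖t‖ ≤ r) (hr : r < 1) :
    ‖Ring.inverse (1 - t) - 1‖ ≤ r / (1 - r) := by
  have ht1 : ‖t‖ < 1 := ht.trans_lt hr
  have hsub : Ring.inverse (1 - t) - 1 = Ring.inverse (1 - t) * t := by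
    have h := (Units.oneSub t ht1).inv_mul
    rw [Units.val_oneSub, mul_sub, mul_one] at h
    rw [NormedRing.inverse_one_sub t ht1, ← h, sub_sub_cancel]
  have hinv : ‖Ring.inverse (1 - t)‖ ≤ (1 - r)⁻¹ := by
    rw [NormedRing.inverse_one_sub t ht1]
    have := tsum_geometric_le_of_norm_lt_one t ht1
    rw [norm_one, sub_self, zero_add] at this
    exact this.trans (inv_anti₀ (by linarith) (by linarith))
  calc ‖Ring.inverse (1 - t) - 1‖ = ‖Ring.inverse (1 - t) * t‖ := by rw [hsub]
    _ ≤ ‖Ring.inverse (1 - t)‖ * ‖t‖ := norm_mul_le _ _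
    _ ≤ (1 - r)⁻¹ * r := by gcongr
    _ = r / (1 - r) := inv_mul_eq_div _ _

namespace Matrix

variable {ι K : Type*} [Fintype ι] [DecidableEq ι] [Field K]

theorem inv_one_sub_smul_eq_of_eigenvector {Q : Matrix ι ι K} {u : ι → K}
    (hu : u ⬝ᵥ u = 1) (hQu : Q *ᵥ u = u) (huQ : u ᵥ* Q = u) {α : K} (hα : α ≠ 1)
    (hE : IsUnit (1 - α • (Q - vecMulVec u u))) :
    (1 - α • Q)⁻¹ = (1 - α • (Q - vecMulVec u u))⁻¹ + (α / (1 - α)) • vecMulVec u u := by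
  set U := vecMulVec u u
  set M := (1 - α • (Q - U))⁻¹
  have hdet : IsUnit (1 - α • (Q - U)).det := (isUnit_iff_isUnit_det _).mp hE
  have hUU : U * U = U := by rw [vecMulVec_mul_vecMulVec, hu, one_smul]
  have hQU : Q * U = U := by rw [mul_vecMulVec, hQu]
  have hUQ : U * Q = U := by rw [vecMulVec_mul, huQ]
  have hUM : U * M = U := by
    have hU : U * (1 - α • (Q - U)) = U := by
      rw [mul_sub, mul_one, mul_smul_comm, mul_sub, hUQ, hUU, sub_self, smul_zero, sub_zero]
    calc U * M = U * (1 - α • (Q - U)) * M := by rw [hU]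
      _ = U := by rw [Matrix.mul_assoc, mul_nonsing_inv _ hdet, Matrix.mul_one]
  have h1α : (1 - α) * (α / (1 - α)) = α := mul_div_cancel₀ _ (sub_ne_zero.mpr hα.symm)
  apply inv_eq_right_inv
  calc (1 - α • Q) * (M + (α / (1 - α)) • U)
      = (1 - α • (Q - U)) * M - α • (U * M) + (α / (1 - α)) • (U - α • (Q * U)) := by
        simp only [mul_add, sub_mul, smul_mul, mul_smul_comm, Matrix.one_mul, smul_sub]
        module
    _ = 1 := by
        rw [mul_nonsing_inv _ hdet, hUM, hQU]
        linear_combination (norm := module) h1α • U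

theorem diagonal_mul_diagonal_inv {s : ι → K} (hs : ∀ i, s i ≠ 0) :
    diagonal s * diagonal (fun i => (s i)⁻¹) = 1 := by
  rw [diagonal_mul_diagonal, ← diagonal_one]
  exact congrArg diagonal (funext fun i => mul_inv_cancel₀ (hs i))

theorem diagonal_inv_mul_diagonal {s : ι → K} (hs : ∀ i, s i ≠ 0) :
    diagonal (fun i => (s i)⁻¹) * diagonal s = 1 := by
  rw [diagonal_mul_diagonal, ← diagonal_one]
  exact congrArg diagonal (funext fun i => inv_mul_cancel₀ (hs i))

theorem inv_diagonal_mul_mul_diagonal_inv {s : ι → K} (hs : ∀ i, s i ≠ 0) (X : Matrix ι ι K) :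
    (diagonal s * X * diagonal (fun i => (s i)⁻¹))⁻¹ =
      diagonal s * X⁻¹ * diagonal (fun i => (s i)⁻¹) := by
  rw [mul_inv_rev, mul_inv_rev, inv_eq_right_inv (diagonal_inv_mul_diagonal hs),
    inv_eq_right_inv (diagonal_mul_diagonal_inv hs), Matrix.mul_assoc]

theorem diagonal_mul_vecMulVec_mul_diagonal (a x y b : ι → K) :
    diagonal a * vecMulVec x y * diagonal b = vecMulVec (a * x) (y * b) := by
  ext i j
  simp [vecMulVec_apply, mul_assoc]

end Matrix

open scoped Matrix.Norms.L2Operator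

theorem sNorm_eq_norm {n : ℕ} (M : Matrix (Fin n) (Fin n) ℝ) : sNorm M = ‖M‖ := rfl

theorem vNorm2_eq_norm {n : ℕ} (x : Fin n → ℝ) : vNorm2 x = ‖WithLp.toLp 2 x‖ := by
  simp [vNorm2, EuclideanSpace.norm_eq]

theorem vNorm2_mulVec_le {n : ℕ} (M : Matrix (Fin n) (Fin n) ℝ) (x : Fin n → ℝ) :
    vNorm2 (M *ᵥ x) ≤ ‖M‖ * vNorm2 x := by
  rw [vNorm2_eq_norm, vNorm2_eq_norm]
  exact M.l2_opNorm_mulVec (WithLp.toLp 2 x)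

theorem sum_abs_le_sqrt_card_mul_vNorm2 {n : ℕ} (x : Fin n → ℝ) :
    ∑ i, |x i| ≤ √n * vNorm2 x := by
  have h : (∑ i, |x i|) ^ 2 ≤ n * ∑ i, x i ^ 2 := by
    simpa using sq_sum_le_card_mul_sum_sq (s := univ) (f := fun i => |x i|)
  rw [vNorm2, ← Real.sqrt_mul (Nat.cast_nonneg n)]
  exact Real.le_sqrt_of_sq_le h

theorem Matrix.l2_opNorm_diagonal_le {ι 𝕜 : Type*} [Fintype ι] [DecidableEq ι] [RCLike 𝕜]
    {s : ι → 𝕜} {C : ℝ} (hC : 0 ≤ C) (hs : ∀ i, ‖s i‖ ≤ C) : ‖(diagonal s : Matrix ι ι 𝕜)‖ ≤ C := by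
  rw [l2_opNorm_diagonal]
  exact (pi_norm_le_iff_of_nonneg hC).mpr hs

theorem vNorm2_nonneg {n : ℕ} (x : Fin n → ℝ) : 0 ≤ vNorm2 x := Real.sqrt_nonneg _

theorem vNorm2_smul {n : ℕ} (c : ℝ) (x : Fin n → ℝ) : vNorm2 (c • x) = |c| * vNorm2 x := by
  rw [vNorm2_eq_norm, vNorm2_eq_norm, WithLp.toLp_smul, norm_smul, Real.norm_eq_abs]

theorem norm_diagonal_sqrt_mul_mul_diagonal_inv_sqrt_le {ι : Type*} [Fintype ι] [DecidableEq ι]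
    [Nonempty ι] {d : ι → ℝ} (hdpos : ∀ i, 0 < d i) (X : Matrix ι ι ℝ) :
    ‖diagonal (fun i => √(d i)) * X * diagonal (fun i => (√(d i))⁻¹)‖ ≤
      √(univ.sup' univ_nonempty d / univ.inf' univ_nonempty d) * ‖X‖ := by
  have hmin : 0 < univ.inf' univ_nonempty d := (lt_inf'_iff _).mpr fun i _ => hdpos i
  have hDh : ‖diagonal (fun i => √(d i))‖ ≤ √(univ.sup' univ_nonempty d) :=
    l2_opNorm_diagonal_le (Real.sqrt_nonneg _) fun i => by
      rw [Real.norm_of_nonneg (Real.sqrt_nonneg _)]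
      exact Real.sqrt_le_sqrt (le_sup' d (mem_univ i))
  have hDih : ‖diagonal (fun i => (√(d i))⁻¹)‖ ≤ (√(univ.inf' univ_nonempty d))⁻¹ :=
    l2_opNorm_diagonal_le (by positivity) fun i => by
      rw [Real.norm_of_nonneg (by positivity)]
      exact inv_anti₀ (Real.sqrt_pos.mpr hmin) (Real.sqrt_le_sqrt (inf'_le d (mem_univ i)))
  calc ‖diagonal (fun i => √(d i)) * X * diagonal (fun i => (√(d i))⁻¹)‖
      ≤ ‖diagonal (fun i => √(d i))‖ * ‖X‖ * ‖diagonal (fun i => (√(d i))⁻¹)‖ :=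
        norm_mul₃_le
    _ ≤ √(univ.sup' univ_nonempty d) * ‖X‖ * (√(univ.inf' univ_nonempty d))⁻¹ := by gcongr
    _ = √(univ.sup' univ_nonempty d / univ.inf' univ_nonempty d) * ‖X‖ := by
        rw [Real.sqrt_div' _ hmin.le]
        ring

section Graph

variable {ι : Type*} [Fintype ι] {A : Matrix ι ι ℝ} {d : ι → ℝ}

noncomputable def perronVector (d : ι → ℝ) : ι → ℝ :=
  fun i => √(d i) / √(∑ j, d j)

theorem perronVector_dotProduct_self [Nonempty ι] (hdpos : ∀ i, 0 < d i) :
    perronVector d ⬝ᵥ perronVector d = 1 := by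
  have hvol : 0 < ∑ j, d j := sum_pos (fun i _ => hdpos i) univ_nonempty
  simp only [dotProduct, perronVector, div_mul_div_comm, Real.mul_self_sqrt (hdpos _).le,
    Real.mul_self_sqrt hvol.le, ← sum_div, div_self hvol.ne']

variable [DecidableEq ι]

noncomputable def normalizedAdj (A : Matrix ι ι ℝ) (d : ι → ℝ) : Matrix ι ι ℝ :=
  diagonal (fun i => (√(d i))⁻¹) * A * diagonal (fun i => (√(d i))⁻¹)

theorem normalizedAdj_transpose (hA : A.IsSymm) : (normalizedAdj A d)ᵀ = normalizedAdj A d := by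
  rw [normalizedAdj, transpose_mul, transpose_mul, diagonal_transpose, hA.eq,
    Matrix.mul_assoc]

theorem normalizedAdj_mulVec_sqrt (hd : ∀ i, d i = ∑ j, A i j) (hdpos : ∀ i, 0 < d i) :
    normalizedAdj A d *ᵥ (fun i => √(d i)) = fun i => √(d i) := by
  have hone : diagonal (fun i => (√(d i))⁻¹) *ᵥ (fun i => √(d i)) = 1 := by
    ext i
    simp [mulVec_diagonal, (Real.sqrt_pos.mpr (hdpos i)).ne']
  have hrow : A *ᵥ 1 = d := by
    ext i
    simp [mulVec, dotProduct, hd]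
  ext i
  have hs : √(d i) ≠ 0 := (Real.sqrt_pos.mpr (hdpos i)).ne'
  rw [normalizedAdj, ← mulVec_mulVec, ← mulVec_mulVec, hone, hrow, mulVec_diagonal,
    inv_mul_eq_div, div_eq_iff hs, Real.mul_self_sqrt (hdpos i).le]

theorem normalizedAdj_mulVec_perronVector (hd : ∀ i, d i = ∑ j, A i j) (hdpos : ∀ i, 0 < d i) :
    normalizedAdj A d *ᵥ perronVector d = perronVector d := by
  have h : perronVector d = (√(∑ j, d j))⁻¹ • fun i => √(d i) := by
    ext i; simp [perronVector, div_eq_inv_mul]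
  rw [h, mulVec_smul, normalizedAdj_mulVec_sqrt hd hdpos]

theorem perronVector_vecMul_normalizedAdj (hA : A.IsSymm) (hd : ∀ i, d i = ∑ j, A i j)
    (hdpos : ∀ i, 0 < d i) : perronVector d ᵥ* normalizedAdj A d = perronVector d := by
  rw [← mulVec_transpose, normalizedAdj_transpose hA, normalizedAdj_mulVec_perronVector hd hdpos]

theorem transition_eq_conj_normalizedAdj (hdpos : ∀ i, 0 < d i) :
    A * diagonal (fun i => (d i)⁻¹) =
      diagonal (fun i => √(d i)) * normalizedAdj A d * diagonal (fun i => (√(d i))⁻¹) := by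
  have hs : ∀ i, √(d i) ≠ 0 := fun i => (Real.sqrt_pos.mpr (hdpos i)).ne'
  ext i j
  simp only [normalizedAdj, mul_diagonal, diagonal_mul]
  field_simp
  rw [Real.sq_sqrt (hdpos j).le, mul_comm (√(d i)), mul_div_mul_right _ _ (hs i)]

theorem inv_one_sub_smul_transition [Nonempty ι] (hA : A.IsSymm) (hd : ∀ i, d i = ∑ j, A i j)
    (hdpos : ∀ i, 0 < d i) {α : ℝ} (hα : α ≠ 1)
    (hE : IsUnit (1 - α • (normalizedAdj A d - vecMulVec (perronVector d) (perronVector d)))) :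
    (1 - α • (A * diagonal (fun i => (d i)⁻¹)))⁻¹ =
      diagonal (fun i => √(d i)) *
        ((1 - α • (normalizedAdj A d - vecMulVec (perronVector d) (perronVector d)))⁻¹ +
          (α / (1 - α)) • vecMulVec (perronVector d) (perronVector d)) *
        diagonal (fun i => (√(d i))⁻¹) := by
  have hs : ∀ i, √(d i) ≠ 0 := fun i => (Real.sqrt_pos.mpr (hdpos i)).ne'
  have hconj : 1 - α • (A * diagonal (fun i => (d i)⁻¹)) =
      diagonal (fun i => √(d i)) * (1 - α • normalizedAdj A d) *
        diagonal (fun i => (√(d i))⁻¹) := by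
    rw [transition_eq_conj_normalizedAdj hdpos, mul_sub, sub_mul, Matrix.mul_one,
      diagonal_mul_diagonal_inv hs, mul_smul_comm, smul_mul]
  rw [hconj, inv_diagonal_mul_mul_diagonal_inv hs,
    inv_one_sub_smul_eq_of_eigenvector (perronVector_dotProduct_self hdpos)
      (normalizedAdj_mulVec_perronVector hd hdpos) (perronVector_vecMul_normalizedAdj hA hd hdpos)
      hα hE]

theorem diagonal_sqrt_mul_vecMulVec_perronVector_mul_diagonal (hdpos : ∀ i, 0 < d i) :
    diagonal (fun i => √(d i)) * vecMulVec (perronVector d) (perronVector d) *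
        diagonal (fun i => (√(d i))⁻¹) = vecMulVec (fun i => d i / ∑ j, d j) 1 := by
  rw [diagonal_mul_vecMulVec_mul_diagonal]
  ext i j
  have hj : √(d j) ≠ 0 := (Real.sqrt_pos.mpr (hdpos j)).ne'
  simp only [vecMulVec_apply, Pi.mul_apply, perronVector, Pi.one_apply, mul_one]
  field_simp
  rw [Real.sq_sqrt (hdpos i).le, Real.sq_sqrt (sum_nonneg fun k _ => (hdpos k).le)]

theorem pagerank_sub_approx_eq [Nonempty ι] (hA : A.IsSymm) (hd : ∀ i, d i = ∑ j, A i j)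
    (hdpos : ∀ i, 0 < d i) {α : ℝ} (hα : α ≠ 1)
    (hE : IsUnit (1 - α • (normalizedAdj A d - vecMulVec (perronVector d) (perronVector d))))
    {v : ι → ℝ} (hv1 : ∑ i, v i = 1) :
    (1 - α) • ((1 - α • (A * diagonal (fun i => (d i)⁻¹)))⁻¹ *ᵥ v) -
        (fun i => α * d i / (∑ j, d j) + (1 - α) * v i) =
      (1 - α) • ((diagonal (fun i => √(d i)) *
        ((1 - α • (normalizedAdj A d - vecMulVec (perronVector d) (perronVector d)))⁻¹ - 1) *
          diagonal (fun i => (√(d i))⁻¹)) *ᵥ v) := by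
  set U := vecMulVec (perronVector d) (perronVector d)
  set M := (1 - α • (normalizedAdj A d - U))⁻¹
  set Dh := diagonal (fun i => √(d i))
  set Dih := diagonal (fun i => (√(d i))⁻¹)
  have hs : ∀ i, √(d i) ≠ 0 := fun i => (Real.sqrt_pos.mpr (hdpos i)).ne'
  have hsplit : Dh * (M + (α / (1 - α)) • U) * Dih =
      Dh * (M - 1) * Dih + Dh * Dih + (α / (1 - α)) • (Dh * U * Dih) := by
    simp only [Matrix.mul_add, Matrix.add_mul, Matrix.mul_sub, Matrix.sub_mul, Matrix.mul_one,
      mul_smul_comm, smul_mul]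
    abel
  rw [inv_one_sub_smul_transition hA hd hdpos hα hE, hsplit, diagonal_mul_diagonal_inv hs,
    diagonal_sqrt_mul_vecMulVec_perronVector_mul_diagonal hdpos, add_mulVec, add_mulVec,
    one_mulVec, smul_mulVec, vecMulVec_mulVec, one_dotProduct, hv1]
  have h1α : 1 - α ≠ 0 := sub_ne_zero.mpr hα.symm
  ext i
  simp only [Pi.sub_apply, Pi.smul_apply, Pi.add_apply, smul_eq_mul, op_smul_eq_smul, one_smul]
  field_simp
  ring

end Graph

theorem pagerank_l1_error_bound_general
    (n : ℕ) [NeZero n]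
    (A : Matrix (Fin n) (Fin n) ℝ) (hAsymm : A.IsSymm)
    (d : Fin n → ℝ) (hd : ∀ i, d i = ∑ j, A i j) (hdpos : ∀ i, 0 < d i)
    (α : ℝ) (hα : α ∈ Set.Ioo (0 : ℝ) 1)
    (v : Fin n → ℝ) (hv1 : ∑ i, v i = 1)
    (μ : ℝ) (hαμ : α * μ < 1)
    (P : Matrix (Fin n) (Fin n) ℝ)
    (hP : P = A * Matrix.diagonal (fun i => (d i)⁻¹))
    (Q : Matrix (Fin n) (Fin n) ℝ)
    (hQ : Q = Matrix.diagonal (fun i => (Real.sqrt (d i))⁻¹) * A *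
      Matrix.diagonal (fun i => (Real.sqrt (d i))⁻¹))
    (u₁ : Fin n → ℝ)
    (hu₁ : u₁ = fun i => Real.sqrt (d i) / Real.sqrt (∑ j, d j))
    (hgap : sNorm (Q - Matrix.vecMulVec u₁ u₁) ≤ μ)
    (π : Fin n → ℝ) (hπ : π = (1 - α) • ((1 - α • P)⁻¹ *ᵥ v))
    (πbar : Fin n → ℝ)
    (hπbar : πbar = fun i => α * d i / (∑ j, d j) + (1 - α) * v i) :
    ∑ i, |π i - πbar i| ≤
      (1 - α) * Real.sqrt n *
        Real.sqrt (univ.sup' univ_nonempty d / univ.inf' univ_nonempty d) *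
        (α * μ / (1 - α * μ)) * vNorm2 v := by
  obtain ⟨hα0, hα1⟩ := hα
  rw [sNorm_eq_norm] at hgap
  have hQ' : Q = normalizedAdj A d := hQ
  have hu₁' : u₁ = perronVector d := hu₁
  subst hQ' hu₁'
  set E := normalizedAdj A d - vecMulVec (perronVector d) (perronVector d)
  have hαE : ‖α • E‖ ≤ α * μ := by
    rw [norm_smul, Real.norm_of_nonneg hα0.le]
    exact mul_le_mul_of_nonneg_left hgap hα0.le
  have hunit : IsUnit (1 - α • E) := (Units.oneSub _ (hαE.trans_lt hαμ)).isUnit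
  have hM : ‖(1 - α • E)⁻¹ - 1‖ ≤ α * μ / (1 - α * μ) := by
    rw [nonsing_inv_eq_ringInverse]
    exact NormedRing.norm_inverse_one_sub_sub_one_le hαE hαμ
  have herr : π - πbar = (1 - α) • ((diagonal (fun i => √(d i)) * ((1 - α • E)⁻¹ - 1) *
      diagonal (fun i => (√(d i))⁻¹)) *ᵥ v) := by
    rw [hπ, hπbar, hP]
    exact pagerank_sub_approx_eq hAsymm hd hdpos hα1.ne hunit hv1
  calc ∑ i, |π i - πbar i| ≤ √n * vNorm2 (π - πbar) := sum_abs_le_sqrt_card_mul_vNorm2 _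
    _ ≤ √n * ((1 - α) * (√(univ.sup' univ_nonempty d / univ.inf' univ_nonempty d) *
          ‖(1 - α • E)⁻¹ - 1‖ * vNorm2 v)) := by
        rw [herr, vNorm2_smul, abs_of_pos (sub_pos.mpr hα1)]
        gcongr
        refine (vNorm2_mulVec_le _ _).trans ?_
        gcongr
        · exact vNorm2_nonneg v
        · exact norm_diagonal_sqrt_mul_mul_diagonal_inv_sqrt_le hdpos _
    _ ≤ √n * ((1 - α) * (√(univ.sup' univ_nonempty d / univ.inf' univ_nonempty d) *
          (α * μ / (1 - α * μ)) * vNorm2 v)) := by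
        have := vNorm2_nonneg v
        gcongr
    _ = _ := by ring

/-- if `‖Q − u₁u₁ᵀ‖₂ ≤ μ` with `μ ∈ [0,1)` and `αμ < 1`, then
`‖π − π̄‖₁ ≤ (1−α)·√n·√(d_max/d_min)·(αμ/(1−αμ))·‖v‖₂`. -/
theorem pagerank_l1_error_bound
    (n : ℕ) [NeZero n]
    (A : Matrix (Fin n) (Fin n) ℝ) (hAsymm : A.IsSymm) (hA0 : ∀ i j, 0 ≤ A i j)
    (d : Fin n → ℝ) (hd : ∀ i, d i = ∑ j, A i j) (hdpos : ∀ i, 0 < d i)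
    (α : ℝ) (hα : α ∈ Set.Ioo (0 : ℝ) 1)
    (v : Fin n → ℝ) (hv0 : ∀ i, 0 ≤ v i) (hv1 : ∑ i, v i = 1)
    (μ : ℝ) (hμ : μ ∈ Set.Ico (0 : ℝ) 1) (hαμ : α * μ < 1)
    (P : Matrix (Fin n) (Fin n) ℝ)
    (hP : P = A * Matrix.diagonal (fun i => (d i)⁻¹))
    (Q : Matrix (Fin n) (Fin n) ℝ)
    (hQ : Q = Matrix.diagonal (fun i => (Real.sqrt (d i))⁻¹) * A *
      Matrix.diagonal (fun i => (Real.sqrt (d i))⁻¹))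
    (u₁ : Fin n → ℝ)
    (hu₁ : u₁ = fun i => Real.sqrt (d i) / Real.sqrt (∑ j, d j))
    (hgap : sNorm (Q - Matrix.vecMulVec u₁ u₁) ≤ μ)
    (π : Fin n → ℝ) (hπ : π = (1 - α) • ((1 - α • P)⁻¹ *ᵥ v))
    (πbar : Fin n → ℝ)
    (hπbar : πbar = fun i => α * d i / (∑ j, d j) + (1 - α) * v i) :
    ∑ i, |π i - πbar i| ≤
      (1 - α) * Real.sqrt n *
        Real.sqrt (univ.sup' univ_nonempty d / univ.inf' univ_nonempty d) *
        (α * μ / (1 - α * μ)) * vNorm2 v :=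
  pagerank_l1_error_bound_general n A hAsymm d hd hdpos α hα v hv1 μ hαμ P hP Q hQ u₁ hu₁ hgap π hπ
    πbar hπbar
end

section
/- Let w₁,…,w_n > 0, W = diag(w), and let η ≥ 0 satisfy max_i |d_i/w_i − 1| ≤ η. Then ‖D^{-1/2} A D^{-1/2} − W^{-1/2} A W^{-1/2}‖₂ ≤ 2η + η². -/
open Matrix Finset

open scoped Matrix.Norms.L2Operator

/-!
Write `S = D^{-1/2} A D^{-1/2}` and `E = diag(√(dᵢ/wᵢ))`, so that `W^{-1/2} A W^{-1/2} = E S E` and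
`S - E S E = (1 - E) S + E S (1 - E)`. The Schur test with weight `√d` gives `‖S‖ ≤ 1`, and
`|√t - 1| ≤ |t - 1|` gives `‖1 - E‖ ≤ η`, hence `‖E‖ ≤ 1 + η`.
-/

theorem Real.abs_sqrt_sub_one_le_abs_sub_one (t : ℝ) : |√t - 1| ≤ |t - 1| := by
  rcases le_or_gt 0 t with ht | ht
  · have hfactor : t - 1 = (√t - 1) * (√t + 1) := by
      rw [mul_comm, ← sq_sub_sq, one_pow, Real.sq_sqrt ht]
    rw [hfactor, abs_mul]
    exact le_mul_of_one_le_right (abs_nonneg _)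
      (le_abs.2 (Or.inl (by linarith [Real.sqrt_nonneg t])))
  · rw [Real.sqrt_eq_zero'.2 ht.le, abs_of_neg (by linarith), abs_of_neg (by linarith)]
    linarith

theorem norm_sub_mul_mul_le {R : Type*} [SeminormedRing R] (s e : R) :
    ‖s - e * s * e‖ ≤ ‖1 - e‖ * ‖s‖ * (1 + ‖e‖) := by
  have hsplit : s - e * s * e = (1 - e) * s + e * s * (1 - e) := by noncomm_ring
  calc ‖s - e * s * e‖ ≤ ‖1 - e‖ * ‖s‖ + ‖e‖ * ‖s‖ * ‖1 - e‖ := by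
        rw [hsplit]
        grw [norm_add_le, norm_mul_le, norm_mul_le (e * s), norm_mul_le e]
    _ = ‖1 - e‖ * ‖s‖ * (1 + ‖e‖) := by ring

namespace Matrix

variable {ι : Type*} [Fintype ι]

theorem sum_sq_mulVec_le_of_schur_test {B : Matrix ι ι ℝ} (hB : ∀ i j, 0 ≤ B i j)
    {p : ι → ℝ} (hp : ∀ i, 0 < p i) {c : ℝ} (hc : 0 ≤ c)
    (hrow : ∀ i, ∑ j, B i j * p j ≤ c * p i) (hcol : ∀ j, ∑ i, B i j * p i ≤ c * p j)
    (x : ι → ℝ) : ∑ i, (B *ᵥ x) i ^ 2 ≤ c ^ 2 * ∑ i, x i ^ 2 := by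
  have hweight (i j) : 0 ≤ B i j * (x j ^ 2 / p j) :=
    mul_nonneg (hB i j) (div_nonneg (sq_nonneg _) (hp j).le)
  -- Cauchy–Schwarz after splitting `B i j * x j = √(B i j * p j) * √(B i j * x j ^ 2 / p j)`
  have hcs (i) : (B *ᵥ x) i ^ 2 ≤ (∑ j, B i j * p j) * ∑ j, B i j * (x j ^ 2 / p j) := by
    refine sum_sq_le_sum_mul_sum_of_sq_le_mul _ (fun j _ => mul_nonneg (hB i j) (hp j).le)
      (fun j _ => hweight i j) fun j _ => le_of_eq ?_
    field_simp [(hp j).ne']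
  calc ∑ i, (B *ᵥ x) i ^ 2 ≤ ∑ i, c * p i * ∑ j, B i j * (x j ^ 2 / p j) := by
        gcongr with i
        exact (hcs i).trans (mul_le_mul_of_nonneg_right (hrow i)
            (sum_nonneg fun j _ => hweight i j))
    _ = c * ∑ j, (∑ i, B i j * p i) * (x j ^ 2 / p j) := by
        simp only [mul_sum, sum_mul]
        rw [sum_comm]
        exact sum_congr rfl fun j _ => sum_congr rfl fun i _ => by ring
    _ ≤ c * ∑ j, c * p j * (x j ^ 2 / p j) := by
        gcongr with j
        · exact div_nonneg (sq_nonneg _) (hp j).le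
        · exact hcol j
    _ = c ^ 2 * ∑ j, x j ^ 2 := by
        rw [mul_sum, mul_sum]
        exact sum_congr rfl fun j _ => by field_simp [(hp j).ne']

variable [DecidableEq ι]

theorem l2_opNorm_le_of_schur_test {B : Matrix ι ι ℝ} (hB : ∀ i j, 0 ≤ B i j)
    {p : ι → ℝ} (hp : ∀ i, 0 < p i) {c : ℝ} (hc : 0 ≤ c)
    (hrow : ∀ i, ∑ j, B i j * p j ≤ c * p i) (hcol : ∀ j, ∑ i, B i j * p i ≤ c * p j) :
    ‖B‖ ≤ c := by
  rw [l2_opNorm_def]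
  refine ContinuousLinearMap.opNorm_le_bound _ hc fun x => ?_
  refine (sq_le_sq₀ (norm_nonneg _) (by positivity)).1 ?_
  simp only [EuclideanSpace.norm_sq_eq, mul_pow, Real.norm_eq_abs, sq_abs]
  exact sum_sq_mulVec_le_of_schur_test hB hp hc hrow hcol _

noncomputable def symmNormalize (v : ι → ℝ) (A : Matrix ι ι ℝ) : Matrix ι ι ℝ :=
  diagonal (fun i => (√(v i))⁻¹) * A * diagonal (fun i => (√(v i))⁻¹)

theorem symmNormalize_apply (v : ι → ℝ) (A : Matrix ι ι ℝ) (i j : ι) :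
    symmNormalize v A i j = (√(v i))⁻¹ * A i j * (√(v j))⁻¹ := by
  simp [symmNormalize, diagonal_mul, mul_diagonal]

theorem IsSymm.symmNormalize {A : Matrix ι ι ℝ} (hA : A.IsSymm) (v : ι → ℝ) :
    (symmNormalize v A).IsSymm :=
  IsSymm.ext fun i j => by simp only [symmNormalize_apply, hA.apply]; ring

theorem l2_opNorm_symmNormalize_le_one {A : Matrix ι ι ℝ} (hAsymm : A.IsSymm)
    (hA0 : ∀ i j, 0 ≤ A i j) {d : ι → ℝ} (hd : ∀ i, d i = ∑ j, A i j) (hdpos : ∀ i, 0 < d i) :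
    ‖symmNormalize d A‖ ≤ 1 := by
  have hsqrt (i) : 0 < √(d i) := Real.sqrt_pos.2 (hdpos i)
  have hrow (i) : ∑ j, symmNormalize d A i j * √(d j) = 1 * √(d i) := by
    simp only [symmNormalize_apply, mul_assoc, inv_mul_cancel₀ (hsqrt _).ne', mul_one,
      ← mul_sum, ← hd]
    rw [one_mul, inv_mul_eq_div, Real.div_sqrt]
  refine l2_opNorm_le_of_schur_test (fun i j => ?_) hsqrt zero_le_one (fun i => (hrow i).le)
    fun j => ?_
  · rw [symmNormalize_apply]
    exact mul_nonneg (mul_nonneg (inv_nonneg.2 (hsqrt i).le) (hA0 i j)) (inv_nonneg.2 (hsqrt j).le)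
  · simpa only [(hAsymm.symmNormalize d).apply j] using (hrow j).le

theorem symmNormalize_eq_diagonal_mul_symmNormalize_mul_diagonal {d : ι → ℝ} (hd : ∀ i, 0 < d i)
    (w : ι → ℝ) (A : Matrix ι ι ℝ) :
    symmNormalize w A = diagonal (fun i => √(d i / w i)) * symmNormalize d A *
      diagonal (fun i => √(d i / w i)) := by
  have hcancel (i) : √(d i / w i) * (√(d i))⁻¹ = (√(w i))⁻¹ := by
    rw [Real.sqrt_div (hd i).le, div_eq_mul_inv, mul_right_comm,
      mul_inv_cancel₀ (Real.sqrt_pos.2 (hd i)).ne', one_mul]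
  have hleft : diagonal (fun i => √(d i / w i)) * diagonal (fun i => (√(d i))⁻¹) =
      diagonal (fun i => (√(w i))⁻¹) := by
    rw [diagonal_mul_diagonal]; simp only [hcancel]
  have hright : diagonal (fun i => (√(d i))⁻¹) * diagonal (fun i => √(d i / w i)) =
      diagonal (fun i => (√(w i))⁻¹) := by
    rw [diagonal_mul_diagonal]; simp only [mul_comm _ (√(d _ / w _)), hcancel]
  calc symmNormalize w A = (diagonal (fun i => √(d i / w i)) * diagonal (fun i => (√(d i))⁻¹)) *
        A * (diagonal (fun i => (√(d i))⁻¹) * diagonal (fun i => √(d i / w i))) := by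
        rw [hleft, hright, symmNormalize]
    _ = _ := by simp only [symmNormalize, Matrix.mul_assoc]

end Matrix

theorem symmetrized_transition_perturbation_bound_general
    (n : ℕ)
    (A : Matrix (Fin n) (Fin n) ℝ) (hAsymm : A.IsSymm) (hA0 : ∀ i j, 0 ≤ A i j)
    (d : Fin n → ℝ) (hd : ∀ i, d i = ∑ j, A i j) (hdpos : ∀ i, 0 < d i)
    (w : Fin n → ℝ)
    (η : ℝ) (hη : 0 ≤ η)
    (hdw : ∀ i, |d i / w i - 1| ≤ η) :
    sNorm (Matrix.diagonal (fun i => (Real.sqrt (d i))⁻¹) * A *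
        Matrix.diagonal (fun i => (Real.sqrt (d i))⁻¹) -
      Matrix.diagonal (fun i => (Real.sqrt (w i))⁻¹) * A *
        Matrix.diagonal (fun i => (Real.sqrt (w i))⁻¹)) ≤ 2 * η + η ^ 2 := by
  set e : Fin n → ℝ := fun i => √(d i / w i)
  have he (i) : |e i - 1| ≤ η := (Real.abs_sqrt_sub_one_le_abs_sub_one _).trans (hdw i)
  have hone_sub : ‖1 - diagonal e‖ ≤ η := by
    rw [← diagonal_one, diagonal_sub, l2_opNorm_diagonal]
    exact (pi_norm_le_iff_of_nonneg hη).2 fun i => by simpa [abs_sub_comm] using he i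
  have hdiag : ‖diagonal e‖ ≤ 1 + η := by
    rw [l2_opNorm_diagonal]
    refine (pi_norm_le_iff_of_nonneg (by linarith)).2 fun i => ?_
    rw [Real.norm_of_nonneg (Real.sqrt_nonneg _)]
    linarith [(abs_le.1 (he i)).2]
  change ‖symmNormalize d A - symmNormalize w A‖ ≤ _
  rw [symmNormalize_eq_diagonal_mul_symmNormalize_mul_diagonal hdpos w]
  calc _ ≤ ‖1 - diagonal e‖ * ‖symmNormalize d A‖ * (1 + ‖diagonal e‖) := norm_sub_mul_mul_le _ _
    _ ≤ η * 1 * (1 + (1 + η)) := by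
        gcongr
        exact l2_opNorm_symmNormalize_le_one hAsymm hA0 hd hdpos
    _ = 2 * η + η ^ 2 := by ring

/-- if `max_i |d_i/w_i − 1| ≤ η`, then
`‖D^{-1/2} A D^{-1/2} − W^{-1/2} A W^{-1/2}‖₂ ≤ 2η + η²`. -/
theorem symmetrized_transition_perturbation_bound
    (n : ℕ) [NeZero n]
    (A : Matrix (Fin n) (Fin n) ℝ) (hAsymm : A.IsSymm) (hA0 : ∀ i j, 0 ≤ A i j)
    (d : Fin n → ℝ) (hd : ∀ i, d i = ∑ j, A i j) (hdpos : ∀ i, 0 < d i)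
    (w : Fin n → ℝ) (hw : ∀ i, 0 < w i)
    (η : ℝ) (hη : 0 ≤ η)
    (hdw : ∀ i, |d i / w i - 1| ≤ η) :
    sNorm (Matrix.diagonal (fun i => (Real.sqrt (d i))⁻¹) * A *
        Matrix.diagonal (fun i => (Real.sqrt (d i))⁻¹) -
      Matrix.diagonal (fun i => (Real.sqrt (w i))⁻¹) * A *
        Matrix.diagonal (fun i => (Real.sqrt (w i))⁻¹)) ≤ 2 * η + η ^ 2 :=
  symmetrized_transition_perturbation_bound_general n A hAsymm hA0 d hd hdpos w η hη hdw
end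

section
/- For every α ∈ [0,1), the matrix I − αQ is invertible and ‖(I − αQ)^{-1}‖_∞ ≤ √(d_max/d_min) / (1 − α). -/
open Matrix Finset

/-- Maximum absolute row-sum norm of a matrix (operator norm induced by the
max vector norm). -/
noncomputable def mNormInf {n : ℕ} (M : Matrix (Fin n) (Fin n) ℝ) : ℝ :=
  ⨆ i, ∑ j, |M i j|

/-!
Writing `s = √d`, the symmetrized matrix is a diagonal conjugate `Q = diag(s) P diag(s)⁻¹` of the
random-walk matrix `P = D⁻¹A`, which is row-stochastic and hence has `‖P‖_∞ ≤ 1`. The Neumann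
series then bounds `‖(I - αP)⁻¹‖_∞` by `(1 - α)⁻¹`, and conjugating back costs at most
`‖diag(s)‖_∞ ‖diag(s)⁻¹‖_∞ = √d_max / √d_min`.
-/

theorem norm_ringInverse_one_sub_le {R : Type*} [NormedRing R] [NormOneClass R]
    [HasSummableGeomSeries R] {x : R} (hx : ‖x‖ < 1) :
    ‖Ring.inverse (1 - x)‖ ≤ (1 - ‖x‖)⁻¹ := by
  simpa [← geom_series_eq_inverse x hx] using tsum_geometric_le_of_norm_lt_one x hx

namespace Matrix

variable {n R : Type*} [Fintype n] [DecidableEq n]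

theorem inv_conj_of_mul_eq_one [CommRing R] {A B : Matrix n n R} (hAB : A * B = 1)
    (M : Matrix n n R) : (A * M * B)⁻¹ = A * M⁻¹ * B := by
  rw [mul_inv_rev, mul_inv_rev, inv_eq_right_inv hAB, inv_eq_left_inv hAB, Matrix.mul_assoc]

theorem isUnit_conj_of_mul_eq_one [CommRing R] {A B M : Matrix n n R} (hAB : A * B = 1)
    (hM : IsUnit M) : IsUnit (A * M * B) :=
  let u : (Matrix n n R)ˣ := ⟨A, B, hAB, mul_eq_one_comm.mp hAB⟩
  (u.isUnit.mul hM).mul u⁻¹.isUnit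

theorem diagonal_sqrt_mul_diagonal_inv_sqrt {d : n → ℝ} (hd : ∀ i, 0 < d i) :
    (diagonal fun i => √(d i)) * diagonal (fun i => (√(d i))⁻¹) = 1 := by
  simp [diagonal_mul_diagonal, fun i => (Real.sqrt_pos.mpr (hd i)).ne']

theorem diagonal_inv_sqrt_mul_mul_diagonal_inv_sqrt (d : n → ℝ) (A : Matrix n n ℝ) :
    diagonal (fun i => (√(d i))⁻¹) * A * diagonal (fun i => (√(d i))⁻¹) =
      (diagonal fun i => √(d i)) * (diagonal (fun i => (d i)⁻¹) * A) *
        diagonal (fun i => (√(d i))⁻¹) := by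
  have hs (x : ℝ) : (√x)⁻¹ = √x * x⁻¹ := by
    rw [← div_eq_mul_inv, Real.sqrt_div_self', one_div]
  ext i j
  simp [diagonal_mul, mul_diagonal, hs, mul_assoc]

theorem diagonal_inv_mul_mem_rowStochastic {A : Matrix n n ℝ} (hA : ∀ i j, 0 ≤ A i j)
    (hrow : ∀ i, 0 < ∑ j, A i j) :
    diagonal (fun i => (∑ j, A i j)⁻¹) * A ∈ rowStochastic ℝ n := by
  refine mem_rowStochastic_iff_sum.mpr ⟨fun i j => ?_, fun i => ?_⟩
  · simpa [diagonal_mul] using mul_nonneg (inv_nonneg.mpr (hrow i).le) (hA i j)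
  · simp [diagonal_mul, ← mul_sum, (hrow i).ne']

section LinftyOpNorm

attribute [local instance] Matrix.linftyOpNormedRing Matrix.linftyOpNormedAlgebra

theorem linfty_opNorm_le_one_of_mem_rowStochastic {P : Matrix n n ℝ}
    (hP : P ∈ rowStochastic ℝ n) : ‖P‖ ≤ 1 := by
  have hrow : ∀ i, ∑ j, ‖P i j‖₊ = 1 := fun i => by
    ext
    simp [Real.norm_eq_abs, abs_of_nonneg (nonneg_of_mem_rowStochastic hP),
      sum_row_of_mem_rowStochastic hP]
  rw [linfty_opNorm_def, NNReal.coe_le_one]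
  exact Finset.sup_le fun i _ => (hrow i).le

theorem isUnit_one_sub_smul_and_linfty_opNorm_inv_le [Nonempty n] {P : Matrix n n ℝ}
    (hP : P ∈ rowStochastic ℝ n) {α : ℝ} (hα : α ∈ Set.Ico (0 : ℝ) 1) :
    IsUnit (1 - α • P) ∧ ‖(1 - α • P)⁻¹‖ ≤ (1 - α)⁻¹ := by
  obtain ⟨hα0, hα1⟩ := hα
  have hαP : ‖α • P‖ ≤ α := by
    simpa [norm_smul, abs_of_nonneg hα0] using
      mul_le_of_le_one_right hα0 (linfty_opNorm_le_one_of_mem_rowStochastic hP)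
  have hαP1 : ‖α • P‖ < 1 := hαP.trans_lt hα1
  refine ⟨isUnit_one_sub_of_norm_lt_one hαP1, ?_⟩
  rw [nonsing_inv_eq_ringInverse]
  calc ‖Ring.inverse (1 - α • P)‖ ≤ (1 - ‖α • P‖)⁻¹ := norm_ringInverse_one_sub_le hαP1
    _ ≤ (1 - α)⁻¹ := by gcongr

variable [Nonempty n]

theorem linfty_opNorm_diagonal_sqrt_le (d : n → ℝ) :
    ‖diagonal fun i => √(d i)‖ ≤ √(univ.sup' univ_nonempty d) := by
  rw [linfty_opNorm_diagonal, pi_norm_le_iff_of_nonneg (Real.sqrt_nonneg _)]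
  intro i
  rw [Real.norm_of_nonneg (Real.sqrt_nonneg _)]
  exact Real.sqrt_le_sqrt (le_sup' d (mem_univ i))

theorem linfty_opNorm_diagonal_inv_sqrt_le {d : n → ℝ} (hd : ∀ i, 0 < d i) :
    ‖diagonal fun i => (√(d i))⁻¹‖ ≤ (√(univ.inf' univ_nonempty d))⁻¹ := by
  rw [linfty_opNorm_diagonal, pi_norm_le_iff_of_nonneg (by positivity)]
  intro i
  rw [norm_inv, Real.norm_of_nonneg (Real.sqrt_nonneg _)]
  exact inv_anti₀ (Real.sqrt_pos.mpr ((lt_inf'_iff _).mpr fun i _ => hd i))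
    (Real.sqrt_le_sqrt (inf'_le d (mem_univ i)))

end LinftyOpNorm

end Matrix

attribute [local instance] Matrix.linftyOpNormedRing in
theorem mNormInf_eq_linfty_opNorm {n : ℕ} (M : Matrix (Fin n) (Fin n) ℝ) :
    mNormInf M = ‖M‖ := by
  simp [mNormInf, linfty_opNorm_def, sup_univ_eq_ciSup, NNReal.coe_iSup, Real.norm_eq_abs]

attribute [local instance] Matrix.linftyOpNormedRing in
theorem resolvent_inf_norm_bound_general
    (n : ℕ) [NeZero n]
    (A : Matrix (Fin n) (Fin n) ℝ) (hA0 : ∀ i j, 0 ≤ A i j)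
    (d : Fin n → ℝ) (hd : ∀ i, d i = ∑ j, A i j) (hdpos : ∀ i, 0 < d i)
    (Q : Matrix (Fin n) (Fin n) ℝ)
    (hQ : Q = Matrix.diagonal (fun i => (Real.sqrt (d i))⁻¹) * A *
      Matrix.diagonal (fun i => (Real.sqrt (d i))⁻¹))
    (α : ℝ) (hα : α ∈ Set.Ico (0 : ℝ) 1) :
    IsUnit (1 - α • Q) ∧
      mNormInf ((1 - α • Q)⁻¹) ≤
        Real.sqrt (univ.sup' univ_nonempty d / univ.inf' univ_nonempty d) / (1 - α) := by
  set E := diagonal fun i => √(d i)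
  set E' := diagonal fun i => (√(d i))⁻¹
  set P := diagonal (fun i => (d i)⁻¹) * A
  have hEE' : E * E' = 1 := diagonal_sqrt_mul_diagonal_inv_sqrt hdpos
  have hconj : 1 - α • Q = E * (1 - α • P) * E' := by
    rw [hQ, diagonal_inv_sqrt_mul_mul_diagonal_inv_sqrt, Matrix.mul_sub, Matrix.sub_mul,
      Matrix.mul_one, hEE', mul_smul_comm, smul_mul_assoc]
  have hP : P ∈ rowStochastic ℝ (Fin n) := by
    simpa only [P, hd] using diagonal_inv_mul_mem_rowStochastic hA0 fun i => hd i ▸ hdpos i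
  obtain ⟨hunit, hnorm⟩ := isUnit_one_sub_smul_and_linfty_opNorm_inv_le hP hα
  refine ⟨hconj ▸ isUnit_conj_of_mul_eq_one hEE' hunit, ?_⟩
  rw [mNormInf_eq_linfty_opNorm, hconj, inv_conj_of_mul_eq_one hEE',
    Real.sqrt_div' _ (le_inf' _ _ fun i _ => (hdpos i).le)]
  calc ‖E * (1 - α • P)⁻¹ * E'‖ ≤ ‖E‖ * ‖(1 - α • P)⁻¹‖ * ‖E'‖ := norm_mul₃_le
    _ ≤ √(univ.sup' univ_nonempty d) * (1 - α)⁻¹ * (√(univ.inf' univ_nonempty d))⁻¹ := by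
      gcongr
      · exact mul_nonneg (Real.sqrt_nonneg _) ((norm_nonneg _).trans hnorm)
      · exact linfty_opNorm_diagonal_sqrt_le d
      · exact linfty_opNorm_diagonal_inv_sqrt_le hdpos
    _ = _ := by ring

/-- for every `α ∈ [0,1)`, `I − αQ` is invertible and
`‖(I − αQ)^{-1}‖_∞ ≤ √(d_max/d_min)/(1 − α)`. -/
theorem resolvent_inf_norm_bound
    (n : ℕ) [NeZero n]
    (A : Matrix (Fin n) (Fin n) ℝ) (hAsymm : A.IsSymm) (hA0 : ∀ i j, 0 ≤ A i j)
    (d : Fin n → ℝ) (hd : ∀ i, d i = ∑ j, A i j) (hdpos : ∀ i, 0 < d i)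
    (Q : Matrix (Fin n) (Fin n) ℝ)
    (hQ : Q = Matrix.diagonal (fun i => (Real.sqrt (d i))⁻¹) * A *
      Matrix.diagonal (fun i => (Real.sqrt (d i))⁻¹))
    (α : ℝ) (hα : α ∈ Set.Ico (0 : ℝ) 1) :
    IsUnit (1 - α • Q) ∧
      mNormInf ((1 - α • Q)⁻¹) ≤
        Real.sqrt (univ.sup' univ_nonempty d / univ.inf' univ_nonempty d) / (1 - α) :=
  resolvent_inf_norm_bound_general n A hA0 d hd hdpos Q hQ α hα
end

section
/- Let n ≥ 1, let u ∈ ℝⁿ be a unit vector with 𝟙ᵀu = 0, let β ∈ ℝ and α ∈ (0,1) with αβ ≠ 1, and let v ∈ ℝⁿ with 𝟙ᵀv = 1. Set P̄ = (1/n)𝟙𝟙ᵀ + β u uᵀ. Then I − αP̄ is invertible and (1−α)(I − αP̄)^{-1} v = (α/n)𝟙 + (1−α)( v + (αβ/(1−αβ)) (uᵀv) u ). (For the Stochastic Block Model with two equal-sized communities, p, q edge probabilities, β = (p−q)/(p+q), and u_i = 1/√n on the first community and −1/√n on the second, P̄ is the averaged transition matrix and the right-hand side is the asymptotic PageRank π̄_SBM.)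 -/
open Matrix Finset

/-!
With `E = 𝟙𝟙ᵀ / n` and `F = uuᵀ` we have `αP̄ = αE + αβF`, where `E` and `F` are orthogonal
idempotents (`𝟙ᵀ𝟙 = n`, `uᵀu = 1`, `𝟙ᵀu = 0`). On the algebra they span,
`1 - aE - bF` therefore inverts like a diagonal matrix, to `1 + a/(1-a) E + b/(1-b) F`,
which exists as soon as `a, b ≠ 1`. Applying it to `v` uses `Ev = 𝟙/n` and `Fv = (uᵀv) u`.
-/

theorem one_sub_smul_add_smul_mul_eq_one {K R : Type*} [Field K] [Ring R] [Algebra K R]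
    {E F : R} {a b : K} (hE : IsIdempotentElem E) (hF : IsIdempotentElem F)
    (hEF : E * F = 0) (hFE : F * E = 0) (ha : a ≠ 1) (hb : b ≠ 1) :
    (1 - (a • E + b • F)) * (1 + (a / (1 - a)) • E + (b / (1 - b)) • F) = 1 := by
  have ha' : 1 - a ≠ 0 := sub_ne_zero.mpr ha.symm
  have hb' : 1 - b ≠ 0 := sub_ne_zero.mpr hb.symm
  simp only [sub_mul, add_mul, mul_add, one_mul, mul_one, smul_mul_smul_comm, hE.eq, hF.eq,
    hEF, hFE, smul_zero, add_zero]
  match_scalars <;> field_simp <;> ring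

section VecMulVec

variable {ι K : Type*} [Fintype ι] [Semiring K]

theorem isIdempotentElem_vecMulVec {x y : ι → K} (h : y ⬝ᵥ x = 1) :
    IsIdempotentElem (vecMulVec x y) := by
  rw [IsIdempotentElem, vecMulVec_mul_vecMulVec, h, one_smul]

theorem vecMulVec_mul_vecMulVec_eq_zero {x y z w : ι → K} (h : y ⬝ᵥ z = 0) :
    vecMulVec x y * vecMulVec z w = 0 := by
  rw [vecMulVec_mul_vecMulVec, h, zero_smul, vecMulVec_zero]

end VecMulVec

/-- for `P̄ = (1/n)𝟙𝟙ᵀ + β uuᵀ` with `u` a unit vector orthogonal to `𝟙`,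
`α ∈ (0,1)`, `αβ ≠ 1` and `𝟙ᵀv = 1`, the matrix `I − αP̄` is invertible and
`(1−α)(I − αP̄)^{-1} v = (α/n)𝟙 + (1−α)(v + (αβ/(1−αβ))(uᵀv)u)`. -/
theorem pagerank_rank_two_transition
    (n : ℕ) [NeZero n]
    (u : Fin n → ℝ) (hu_unit : ∑ i, (u i) ^ 2 = 1) (hu_orth : ∑ i, u i = 0)
    (β : ℝ) (α : ℝ) (hα : α ∈ Set.Ioo (0 : ℝ) 1) (hαβ : α * β ≠ 1)
    (v : Fin n → ℝ) (hv : ∑ i, v i = 1)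
    (Pbar : Matrix (Fin n) (Fin n) ℝ)
    (hPbar : Pbar = ((n : ℝ)⁻¹) • Matrix.vecMulVec (fun _ => 1) (fun _ => 1) +
      β • Matrix.vecMulVec u u) :
    IsUnit (1 - α • Pbar) ∧
      (1 - α) • ((1 - α • Pbar)⁻¹ *ᵥ v) =
        (α / n) • (fun _ => (1 : ℝ)) +
          (1 - α) • (v + (α * β / (1 - α * β)) • ((∑ i, u i * v i) • u)) := by
  set e : Fin n → ℝ := fun _ => (n : ℝ)⁻¹
  have he_one : (fun _ => 1) ⬝ᵥ e = 1 := by simp [e, dotProduct]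
  have hu_u : u ⬝ᵥ u = 1 := by simpa [dotProduct, sq] using hu_unit
  have hone_u : (fun _ => 1) ⬝ᵥ u = 0 := by simpa [dotProduct] using hu_orth
  have hu_e : u ⬝ᵥ e = 0 := by simp [e, dotProduct, ← Finset.sum_mul, hu_orth]
  have hαPbar : α • Pbar = α • vecMulVec e (fun _ => 1) + (α * β) • vecMulVec u u := by
    have he : e = (n : ℝ)⁻¹ • fun _ => 1 := by ext; simp [e]
    rw [hPbar, he, smul_vecMulVec, smul_add, smul_smul, smul_smul]
  have hright := one_sub_smul_add_smul_mul_eq_one (isIdempotentElem_vecMulVec he_one)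
    (isIdempotentElem_vecMulVec hu_u) (vecMulVec_mul_vecMulVec_eq_zero hone_u)
    (vecMulVec_mul_vecMulVec_eq_zero hu_e) hα.2.ne hαβ
  rw [← hαPbar] at hright
  refine ⟨isUnit_iff_exists_inv.2 ⟨_, hright⟩, ?_⟩
  have h1α : 1 - α ≠ 0 := sub_ne_zero.mpr hα.2.ne'
  rw [inv_eq_right_inv hright]
  simp only [add_mulVec, one_mulVec, smul_mulVec, vecMulVec_mulVec, op_smul_eq_smul]
  ext i
  simp only [dotProduct, one_mul, hv, one_smul, Pi.smul_apply, Pi.add_apply, smul_eq_mul,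
    smul_add, mul_one, e]
  field_simp
  ring
end
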